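/- arXiv:2509.14118 — 8 statements merged into one kernel-verified Lean document; each statement's English description precedes it below -/
import Mathlib

section
/- Let N be a symmetric positive definite m×m real matrix, H an m×l real matrix of full column rank l, and Q an l×l symmetric positive definite matrix. Define R = H Q Hᵀ + N. Then every eigenvalue of R N⁻¹ is ≥ 1, and the number of eigenvalues of R N⁻¹ strictly greater than 1 equals l. -/
/-!
Conjugating by `S = N^{-1/2}` gives `S R S = 1 + S H Q Hᵀ S`, and `S H Q Hᵀ S` is positive
semidefinite of rank `rank H = l`. So the spectrum is `1` plus a nonnegative spectrum with
exactly `l` nonzero entries.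
-/

open Matrix

/-- The `i`-th largest value of `f` (descending sort). -/
noncomputable def sortedDesc {n : ℕ} (f : Fin n → ℝ) : Fin n → ℝ :=
  fun i => f (Tuple.sort f i.rev)

namespace Matrix.PosSemidef

open scoped ComplexOrder

/-- The positive semidefinite square root of a positive semidefinite matrix (as defined in
Mathlib of December 2024; removed from later Mathlib). -/
noncomputable def sqrt {n : Type*} [Fintype n] [DecidableEq n] {𝕜 : Type*} [RCLike 𝕜]
    {A : Matrix n n 𝕜} (hA : A.PosSemidef) : Matrix n n 𝕜 :=
  hA.1.eigenvectorUnitary.1 * diagonal ((↑) ∘ (√·) ∘ hA.1.eigenvalues) *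
    (star hA.1.eigenvectorUnitary : Matrix n n 𝕜)

end Matrix.PosSemidef

open scoped ComplexOrder MatrixOrder

namespace Matrix

theorem mul_mul_self_eq_one_of_mul_self_eq_inv {n R : Type*} [Fintype n] [DecidableEq n]
    [CommRing R] {S N : Matrix n n R} (hN : IsUnit N.det) (h : S * S = N⁻¹) : S * N * S = 1 :=
  mul_eq_one_comm.mp (by rw [← Matrix.mul_assoc, h, nonsing_inv_mul _ hN])

variable {n 𝕜 : Type*} [Fintype n] [DecidableEq n] [RCLike 𝕜]

theorem PosSemidef.sqrt_eq_cfcSqrt {A : Matrix n n 𝕜} (hA : A.PosSemidef) :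
    hA.sqrt = CFC.sqrt A := by
  rw [CFC.sqrt_eq_cfc, cfc_nnreal_eq_real _ A, hA.1.cfc_eq]
  simp only [IsHermitian.cfc, PosSemidef.sqrt, Unitary.conjStarAlgAut_apply]
  congr 3
  funext i
  simp [hA.eigenvalues_nonneg i]

theorem rank_mul_mul_conjTranspose_of_posDef {m l : Type*} [Fintype m] [Fintype l]
    [DecidableEq l] (H : Matrix m l 𝕜) {Q : Matrix l l 𝕜} (hQ : Q.PosDef) :
    (H * Q * Hᴴ).rank = H.rank := by
  obtain ⟨B, rfl⟩ := CStarAlgebra.nonneg_iff_eq_star_mul_self.mp hQ.posSemidef.nonneg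
  have hB : IsUnit (star B).det :=
    isUnit_of_mul_isUnit_left (by rw [← det_mul]; exact hQ.isUnit.map detMonoidHom)
  rw [show H * (star B * B) * Hᴴ = (H * star B) * (H * star B)ᴴ by
      simp [star_eq_conjTranspose, conjTranspose_mul, Matrix.mul_assoc],
    rank_self_mul_conjTranspose, rank_mul_eq_left_of_isUnit_det _ _ hB]

namespace IsHermitian

variable {A : Matrix n n 𝕜} (hA : A.IsHermitian)
include hA

theorem le_eigenvalues {c : ℝ} (h : (A - c • 1).PosSemidef) (i : n) : c ≤ hA.eigenvalues i := by
  have hv : star ⇑(hA.eigenvectorBasis i) ⬝ᵥ ⇑(hA.eigenvectorBasis i) = 1 := by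
    rw [dotProduct_comm, ← EuclideanSpace.inner_eq_star_dotProduct, inner_self_eq_norm_sq_to_K,
      hA.eigenvectorBasis.orthonormal.1 i]
    simp
  have := h.re_dotProduct_nonneg (hA.eigenvectorBasis i)
  rw [sub_mulVec, dotProduct_sub, smul_mulVec, one_mulVec, dotProduct_smul, hv, map_sub,
    ← hA.eigenvalues_eq] at this
  simpa [RCLike.smul_re] using this

theorem sub_smul_one_eq_mul_diagonal_mul (c : ℝ) :
    A - c • 1 = (hA.eigenvectorUnitary : Matrix n n 𝕜) *
      diagonal (fun i => ((hA.eigenvalues i - c : ℝ) : 𝕜)) *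
      star (hA.eigenvectorUnitary : Matrix n n 𝕜) := by
  conv_lhs => rw [hA.spectral_theorem, Unitary.conjStarAlgAut_apply]
  simp only [RCLike.ofReal_sub, ← diagonal_sub]
  rw [Matrix.mul_sub, Matrix.sub_mul]
  congr 1
  rw [← smul_one_eq_diagonal, Matrix.mul_smul, Matrix.mul_one, Matrix.smul_mul,
    Unitary.mul_star_self_of_mem (SetLike.coe_mem _), RCLike.real_smul_eq_coe_smul (K := 𝕜)]

theorem rank_sub_smul_one (c : ℝ) :
    (A - c • 1).rank = Fintype.card {i // hA.eigenvalues i ≠ c} := by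
  have hU : (hA.eigenvectorUnitary : Matrix n n 𝕜) *
      star (hA.eigenvectorUnitary : Matrix n n 𝕜) = 1 :=
    Unitary.mul_star_self_of_mem (SetLike.coe_mem _)
  rw [hA.sub_smul_one_eq_mul_diagonal_mul,
    rank_mul_eq_left_of_isUnit_det _ _ (isUnit_det_of_right_inverse (mul_eq_one_comm.mp hU)),
    rank_mul_eq_right_of_isUnit_det _ _ (isUnit_det_of_right_inverse hU), rank_diagonal]
  simp [sub_eq_zero]

theorem card_filter_lt_eigenvalues_eq_rank {c : ℝ} (h : (A - c • 1).PosSemidef) :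
    (Finset.univ.filter fun i => c < hA.eigenvalues i).card = (A - c • 1).rank := by
  rw [hA.rank_sub_smul_one, Fintype.card_subtype]
  congr 1
  ext i
  simp [lt_iff_le_and_ne, hA.le_eigenvalues h i, eq_comm]

end IsHermitian

end Matrix

/-- With `R = H Q Hᵀ + N`, the eigenvalues of `R N⁻¹` (equivalently, of the similar
symmetric matrix `N^{-1/2} R N^{-1/2}`) are all `≥ 1`, and exactly `l` of them
(counted with multiplicity) are `> 1`. -/
theorem stmt_0 {m l : ℕ} (N : Matrix (Fin m) (Fin m) ℝ) (hN : N.PosDef)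
    (H : Matrix (Fin m) (Fin l) ℝ) (hH : H.rank = l)
    (Q : Matrix (Fin l) (Fin l) ℝ) (hQ : Q.PosDef) :
    ∀ hM : (hN.inv.posSemidef.sqrt * (H * Q * Hᵀ + N) * hN.inv.posSemidef.sqrt).IsHermitian,
      (∀ i, 1 ≤ hM.eigenvalues i) ∧
      (Finset.univ.filter fun i => 1 < hM.eigenvalues i).card = l := by
  set S := hN.inv.posSemidef.sqrt
  intro hM
  have hS : S = CFC.sqrt N⁻¹ := hN.inv.posSemidef.sqrt_eq_cfcSqrt
  have hSS : S * S = N⁻¹ := hS ▸ CFC.sqrt_mul_sqrt_self N⁻¹ hN.inv.posSemidef.nonneg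
  have hSH : Sᴴ = S := (hS ▸ (CFC.sqrt_nonneg N⁻¹).posSemidef).1
  have hSNS : S * N * S = 1 :=
    mul_mul_self_eq_one_of_mul_self_eq_inv (hN.isUnit.map detMonoidHom) hSS
  have hS_det : IsUnit S.det :=
    isUnit_det_of_right_inverse (B := N * S) (by rwa [← Matrix.mul_assoc])
  have hsub : S * (H * Q * Hᵀ + N) * S - (1 : ℝ) • 1 = S * (H * Q * Hᴴ) * Sᴴ := by
    rw [one_smul, Matrix.mul_add, Matrix.add_mul, hSNS, add_sub_cancel_right, hSH,
      conjTranspose_eq_transpose_of_trivial]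
  have hpsd : (S * (H * Q * Hᵀ + N) * S - (1 : ℝ) • 1).PosSemidef :=
    hsub ▸ (hQ.posSemidef.mul_mul_conjTranspose_same H).mul_mul_conjTranspose_same S
  refine ⟨hM.le_eigenvalues hpsd, ?_⟩
  rw [hM.card_filter_lt_eigenvalues_eq_rank hpsd, hsub, hSH,
    rank_mul_eq_left_of_isUnit_det _ _ hS_det, rank_mul_eq_right_of_isUnit_det _ _ hS_det,
    rank_mul_mul_conjTranspose_of_posDef H hQ, hH]
end

section
/- Let N be a symmetric positive definite m×m real matrix, H an m×l real matrix of full column rank, and Q an l×l symmetric positive definite matrix. Define R = H Q Hᵀ + N, S₀ = Hᵀ R⁻¹ H and G₀ = Hᵀ N⁻¹ H. Then Q = S₀⁻¹ − G₀⁻¹. -/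
/-! With `G = Hᵀ N⁻¹ H` and `R = H Q Hᵀ + N`, the push-through identity `H (1 + Q G) = R N⁻¹ H`
gives `Hᵀ R⁻¹ H (1 + Q G) = G`, hence `(Hᵀ R⁻¹ H)⁻¹ = (1 + Q G) G⁻¹ = G⁻¹ + Q`. -/

open Matrix

namespace Matrix

variable {K : Type*} [Field K] {m n : Type*} [Fintype n]

theorem mulVec_injective_of_rank_eq_card (A : Matrix m n K) (hA : A.rank = Fintype.card n) :
    Function.Injective A.mulVec := by
  have hker := LinearMap.finrank_range_add_finrank_ker A.mulVecLin
  rw [← rank, hA, Module.finrank_fintype_fun_eq_card, Nat.add_eq_left,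
    Submodule.finrank_eq_zero] at hker
  exact LinearMap.ker_eq_bot.mp hker

variable [Fintype m] [DecidableEq m] [DecidableEq n]

theorem mul_inv_mul_mul_one_add (N : Matrix m m K) (H : Matrix m n K) (Q : Matrix n n K)
    (C : Matrix n m K) (hN : IsUnit N.det) (hR : IsUnit (H * Q * C + N).det) :
    C * (H * Q * C + N)⁻¹ * H * (1 + Q * (C * N⁻¹ * H)) = C * N⁻¹ * H := by
  have push : H * (1 + Q * (C * N⁻¹ * H)) = (H * Q * C + N) * (N⁻¹ * H) := by
    rw [Matrix.add_mul, ← Matrix.mul_assoc N, mul_nonsing_inv N hN, Matrix.one_mul,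
      Matrix.mul_add, Matrix.mul_one, add_comm]
    simp only [Matrix.mul_assoc]
  rw [Matrix.mul_assoc _ H, Matrix.mul_assoc C, push, ← Matrix.mul_assoc _ (H * Q * C + N),
    nonsing_inv_mul _ hR, Matrix.one_mul, Matrix.mul_assoc]

theorem inv_mul_inv_mul_eq_inv_add (N : Matrix m m K) (H : Matrix m n K) (Q : Matrix n n K)
    (C : Matrix n m K) (hN : IsUnit N.det) (hR : IsUnit (H * Q * C + N).det)
    (hG : IsUnit (C * N⁻¹ * H).det) :
    (C * (H * Q * C + N)⁻¹ * H)⁻¹ = (C * N⁻¹ * H)⁻¹ + Q := by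
  have factor : (C * N⁻¹ * H)⁻¹ + Q = (1 + Q * (C * N⁻¹ * H)) * (C * N⁻¹ * H)⁻¹ := by
    rw [Matrix.add_mul, Matrix.one_mul, Matrix.mul_assoc Q, mul_nonsing_inv _ hG, Matrix.mul_one]
  refine inv_eq_right_inv ?_
  rw [factor, ← Matrix.mul_assoc, mul_inv_mul_mul_one_add N H Q C hN hR, mul_nonsing_inv _ hG]

end Matrix

/-- With `R = H Q Hᵀ + N`, `S₀ = Hᵀ R⁻¹ H`, `G₀ = Hᵀ N⁻¹ H`, one has `Q = S₀⁻¹ − G₀⁻¹`. -/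
theorem stmt_1 {m l : ℕ} (N : Matrix (Fin m) (Fin m) ℝ) (hN : N.PosDef)
    (H : Matrix (Fin m) (Fin l) ℝ) (hH : H.rank = l)
    (Q : Matrix (Fin l) (Fin l) ℝ) (hQ : Q.PosDef) :
    Q = (Hᵀ * (H * Q * Hᵀ + N)⁻¹ * H)⁻¹ - (Hᵀ * N⁻¹ * H)⁻¹ := by
  have hH_inj : Function.Injective H.mulVec :=
    H.mulVec_injective_of_rank_eq_card (by rw [hH, Fintype.card_fin])
  have hR : (H * Q * Hᵀ + N).PosDef :=
    PosDef.posSemidef_add (hQ.posSemidef.mul_mul_conjTranspose_same H) hN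
  have hG : (Hᵀ * N⁻¹ * H).PosDef := hN.inv.conjTranspose_mul_mul_same hH_inj
  rw [inv_mul_inv_mul_eq_inv_add N H Q Hᵀ ((isUnit_iff_isUnit_det _).mp hN.isUnit)
    ((isUnit_iff_isUnit_det _).mp hR.isUnit) ((isUnit_iff_isUnit_det _).mp hG.isUnit)]
  abel
end

section
/- Let R be a symmetric positive definite m×m real matrix and H an m×l real matrix of full column rank l ≤ m. Then the matrix W = (Hᵀ R⁻¹ H)⁻¹ Hᵀ R⁻¹ is the unique minimizer of tr(W R Wᵀ) over all l×m real matrices W satisfying W H = I_l. -/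
/-!
Write `W₀ = (Hᵀ R⁻¹ H)⁻¹ Hᵀ R⁻¹`, so that `W₀ R = (Hᵀ R⁻¹ H)⁻¹ Hᵀ`. For a feasible `W` the
difference `D = W - W₀` satisfies `D H = 0`, hence `W₀ R Dᵀ = 0` and the cost splits as
`tr(W R Wᵀ) = tr(W₀ R W₀ᵀ) + tr(D R Dᵀ)`. Since `R ≻ 0`, the last term is nonnegative and vanishes
only for `D = 0`.
-/

open Matrix

namespace Matrix

variable {m n k : Type*} [Fintype n]

theorem mulVec_injective_of_rank_eq_card_s2 {K : Type*} [Field K] {H : Matrix m n K}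
    (hH : H.rank = Fintype.card n) : Function.Injective H.mulVec := by
  have := LinearMap.finrank_range_add_finrank_ker H.mulVecLin
  rwa [← Matrix.rank, hH, Module.finrank_fintype_fun_eq_card, add_eq_left,
    Submodule.finrank_eq_zero, LinearMap.ker_eq_bot] at this

theorem PosDef.eq_zero_of_mul_mul_transpose_eq_zero {R : Matrix n n ℝ} (hR : R.PosDef)
    {D : Matrix m n ℝ} (h : D * R * Dᵀ = 0) : D = 0 := by
  funext i
  by_contra hDi
  have hdiag : (D * R * Dᵀ) i i = D i ⬝ᵥ R *ᵥ D i := by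
    rw [dotProduct_mulVec, ← mul_apply_eq_vecMul]; rfl
  have hpos := hR.dotProduct_mulVec_pos hDi
  rw [star_trivial, ← hdiag, h] at hpos
  exact lt_irrefl _ hpos

theorem PosDef.trace_mul_mul_transpose_eq_zero_iff [Fintype m] {R : Matrix n n ℝ}
    (hR : R.PosDef) {D : Matrix m n ℝ} : (D * R * Dᵀ).trace = 0 ↔ D = 0 := by
  have hPSD : (D * R * Dᵀ).PosSemidef := hR.posSemidef.mul_mul_conjTranspose_same D
  rw [hPSD.trace_eq_zero_iff]
  exact ⟨hR.eq_zero_of_mul_mul_transpose_eq_zero, fun hD ↦ by simp [hD]⟩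

theorem add_mul_mul_transpose_add {R : Matrix n n ℝ} (hR : R.IsSymm) {A B : Matrix m n ℝ}
    (hAB : A * R * Bᵀ = 0) : (A + B) * R * (A + B)ᵀ = A * R * Aᵀ + B * R * Bᵀ := by
  have hBA : B * R * Aᵀ = 0 := by
    rw [← transpose_transpose (B * R * Aᵀ)]
    simp only [transpose_mul, transpose_transpose, hR.eq, ← Matrix.mul_assoc, hAB, transpose_zero]
  simp only [transpose_add, Matrix.mul_add, Matrix.add_mul, hAB, hBA]
  abel

variable [DecidableEq n] [Fintype k] [DecidableEq k]

noncomputable def lcmvFilter (R : Matrix n n ℝ) (H : Matrix n k ℝ) : Matrix k n ℝ :=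
  (Hᵀ * R⁻¹ * H)⁻¹ * Hᵀ * R⁻¹

variable {R : Matrix n n ℝ} {H : Matrix n k ℝ}

theorem lcmvFilter_mul_self (hR : R.PosDef) (hH : Function.Injective H.mulVec) :
    lcmvFilter R H * H = 1 := by
  have hG : (Hᵀ * R⁻¹ * H).PosDef := hR.inv.conjTranspose_mul_mul_same hH
  rw [lcmvFilter, Matrix.mul_assoc, Matrix.mul_assoc, ← Matrix.mul_assoc Hᵀ,
    nonsing_inv_mul _ hG.det_pos.ne'.isUnit]

theorem lcmvFilter_mul_mul_transpose_eq_zero (hR : R.PosDef) {D : Matrix k n ℝ}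
    (hD : D * H = 0) : lcmvFilter R H * R * Dᵀ = 0 := by
  rw [lcmvFilter, nonsing_inv_mul_cancel_right (A := R) _ hR.det_pos.ne'.isUnit,
    Matrix.mul_assoc, ← transpose_mul, hD, transpose_zero, Matrix.mul_zero]

theorem mul_mul_transpose_eq_lcmvFilter_add (hR : R.PosDef) (hH : Function.Injective H.mulVec)
    {W : Matrix k n ℝ} (hW : W * H = 1) :
    W * R * Wᵀ = lcmvFilter R H * R * (lcmvFilter R H)ᵀ +
      (W - lcmvFilter R H) * R * (W - lcmvFilter R H)ᵀ := by
  have hD : (W - lcmvFilter R H) * H = 0 := by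
    rw [Matrix.sub_mul, hW, lcmvFilter_mul_self hR hH, sub_self]
  rw [← add_mul_mul_transpose_add (isHermitian_iff_isSymm.mp hR.isHermitian)
    (lcmvFilter_mul_mul_transpose_eq_zero hR hD), add_sub_cancel]

theorem trace_lcmvFilter_le (hR : R.PosDef) (hH : Function.Injective H.mulVec)
    {W : Matrix k n ℝ} (hW : W * H = 1) :
    (lcmvFilter R H * R * (lcmvFilter R H)ᵀ).trace ≤ (W * R * Wᵀ).trace := by
  rw [mul_mul_transpose_eq_lcmvFilter_add hR hH hW, trace_add, le_add_iff_nonneg_right]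
  exact (hR.posSemidef.mul_mul_conjTranspose_same _).trace_nonneg

theorem eq_lcmvFilter_of_trace_eq (hR : R.PosDef) (hH : Function.Injective H.mulVec)
    {W : Matrix k n ℝ} (hW : W * H = 1)
    (h : (W * R * Wᵀ).trace = (lcmvFilter R H * R * (lcmvFilter R H)ᵀ).trace) :
    W = lcmvFilter R H := by
  rw [mul_mul_transpose_eq_lcmvFilter_add hR hH hW, trace_add, add_eq_left,
    hR.trace_mul_mul_transpose_eq_zero_iff] at h
  exact sub_eq_zero.mp h

end Matrix

theorem stmt_2_general {m l : ℕ} (R : Matrix (Fin m) (Fin m) ℝ) (hR : R.PosDef)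
    (H : Matrix (Fin m) (Fin l) ℝ) (hH : H.rank = l) :
    ((Hᵀ * R⁻¹ * H)⁻¹ * Hᵀ * R⁻¹) * H = 1 ∧
    (∀ W : Matrix (Fin l) (Fin m) ℝ, W * H = 1 →
      ((((Hᵀ * R⁻¹ * H)⁻¹ * Hᵀ * R⁻¹) * R * ((Hᵀ * R⁻¹ * H)⁻¹ * Hᵀ * R⁻¹)ᵀ).trace ≤
        (W * R * Wᵀ).trace ∧
      ((W * R * Wᵀ).trace =
        (((Hᵀ * R⁻¹ * H)⁻¹ * Hᵀ * R⁻¹) * R * ((Hᵀ * R⁻¹ * H)⁻¹ * Hᵀ * R⁻¹)ᵀ).trace →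
        W = (Hᵀ * R⁻¹ * H)⁻¹ * Hᵀ * R⁻¹))) := by
  have hHinj : Function.Injective H.mulVec :=
    mulVec_injective_of_rank_eq_card_s2 (by rwa [Fintype.card_fin])
  exact ⟨lcmvFilter_mul_self hR hHinj, fun W hW ↦
    ⟨trace_lcmvFilter_le hR hHinj hW, eq_lcmvFilter_of_trace_eq hR hHinj hW⟩⟩

/-- The LCMV filter `W₀ = (Hᵀ R⁻¹ H)⁻¹ Hᵀ R⁻¹` is the unique minimizer of
`tr(W R Wᵀ)` subject to the unit-gain constraint `W H = I`. -/
theorem stmt_2 {m l : ℕ} (R : Matrix (Fin m) (Fin m) ℝ) (hR : R.PosDef)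
    (H : Matrix (Fin m) (Fin l) ℝ) (hH : H.rank = l) (hlm : l ≤ m) :
    ((Hᵀ * R⁻¹ * H)⁻¹ * Hᵀ * R⁻¹) * H = 1 ∧
    (∀ W : Matrix (Fin l) (Fin m) ℝ, W * H = 1 →
      ((((Hᵀ * R⁻¹ * H)⁻¹ * Hᵀ * R⁻¹) * R * ((Hᵀ * R⁻¹ * H)⁻¹ * Hᵀ * R⁻¹)ᵀ).trace ≤
        (W * R * Wᵀ).trace ∧
      ((W * R * Wᵀ).trace =
        (((Hᵀ * R⁻¹ * H)⁻¹ * Hᵀ * R⁻¹) * R * ((Hᵀ * R⁻¹ * H)⁻¹ * Hᵀ * R⁻¹)ᵀ).trace →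
        W = (Hᵀ * R⁻¹ * H)⁻¹ * Hᵀ * R⁻¹))) :=
  stmt_2_general R hR H hH
end

section
/- Let N be symmetric positive definite m×m, H an m×l real matrix of full column rank, Q an l×l symmetric positive definite matrix, and R = H Q Hᵀ + N. Then W_R := (Hᵀ R⁻¹ H)⁻¹ Hᵀ R⁻¹ equals W_N := (Hᵀ N⁻¹ H)⁻¹ Hᵀ N⁻¹. -/
/-!
With `A = Hᵀ N⁻¹ H` one has `Hᵀ N⁻¹ R = (A Q + 1) Hᵀ`, hence `Hᵀ R⁻¹ = S Hᵀ N⁻¹` for the invertible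
matrix `S = (A Q + 1)⁻¹`. Replacing `Hᵀ R⁻¹` by `S Hᵀ N⁻¹` in `(Hᵀ R⁻¹ H)⁻¹ Hᵀ R⁻¹` the factor `S`
cancels. Invertibility of `A Q + 1 = (A + Q⁻¹) Q` comes from positivity: `A + Q⁻¹` is positive
definite.
-/

open Matrix

open scoped ComplexOrder

namespace Matrix

variable {l m : Type*} [Fintype l] [DecidableEq l] [Fintype m]

theorem inv_mul_mul_eq_of_isUnit_det {α : Type*} [CommRing α] {S : Matrix l l α}
    (hS : IsUnit S.det) (X : Matrix l m α) (Y : Matrix m l α) :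
    (S * X * Y)⁻¹ * (S * X) = (X * Y)⁻¹ * X := by
  rw [Matrix.mul_assoc S X Y, mul_inv_rev, Matrix.mul_assoc, nonsing_inv_mul_cancel_left _ _ hS]

theorem mul_inv_mul_mul_add_eq [DecidableEq m] {α : Type*} [CommRing α] {N : Matrix m m α}
    (G : Matrix l m α) (H : Matrix m l α) (Q : Matrix l l α) (hN : IsUnit N.det)
    (hR : IsUnit (H * Q * G + N).det) (hS : IsUnit (G * N⁻¹ * H * Q + 1).det) :
    G * (H * Q * G + N)⁻¹ = (G * N⁻¹ * H * Q + 1)⁻¹ * (G * N⁻¹) := by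
  have push : G * N⁻¹ * (H * Q * G + N) = (G * N⁻¹ * H * Q + 1) * G := by
    rw [Matrix.mul_add, Matrix.add_mul, nonsing_inv_mul_cancel_right _ _ hN, Matrix.one_mul]
    simp only [Matrix.mul_assoc]
  calc G * (H * Q * G + N)⁻¹
      = (G * N⁻¹ * H * Q + 1)⁻¹ * ((G * N⁻¹ * H * Q + 1) * G) * (H * Q * G + N)⁻¹ := by
        rw [nonsing_inv_mul_cancel_left _ _ hS]
    _ = (G * N⁻¹ * H * Q + 1)⁻¹ * (G * N⁻¹) := by
        rw [← push, Matrix.mul_assoc, mul_nonsing_inv_cancel_right _ _ hR]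

theorem PosSemidef.isUnit_det_mul_add_one {𝕜 : Type*} [RCLike 𝕜] {A Q : Matrix l l 𝕜}
    (hA : A.PosSemidef) (hQ : Q.PosDef) : IsUnit (A * Q + 1).det := by
  have hQu : IsUnit Q.det := hQ.isUnit.map detMonoidHom
  have factor : A * Q + 1 = (A + Q⁻¹) * Q := by rw [Matrix.add_mul, nonsing_inv_mul Q hQu]
  rw [factor, det_mul]
  exact ((PosDef.posSemidef_add hA hQ.inv).isUnit.map detMonoidHom).mul hQu

end Matrix

theorem stmt_3_general {m l : ℕ} (N : Matrix (Fin m) (Fin m) ℝ) (hN : N.PosDef)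
    (H : Matrix (Fin m) (Fin l) ℝ)
    (Q : Matrix (Fin l) (Fin l) ℝ) (hQ : Q.PosDef) :
    (Hᵀ * (H * Q * Hᵀ + N)⁻¹ * H)⁻¹ * Hᵀ * (H * Q * Hᵀ + N)⁻¹ =
      (Hᵀ * N⁻¹ * H)⁻¹ * Hᵀ * N⁻¹ := by
  have hA : (Hᵀ * N⁻¹ * H).PosSemidef := by
    simpa only [conjTranspose_eq_transpose_of_trivial] using
      hN.inv.posSemidef.conjTranspose_mul_mul_same H
  have hR : (H * Q * Hᵀ + N).PosDef := by
    simpa only [conjTranspose_eq_transpose_of_trivial] using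
      PosDef.posSemidef_add (hQ.posSemidef.mul_mul_conjTranspose_same H) hN
  have hS := hA.isUnit_det_mul_add_one hQ
  rw [Matrix.mul_assoc _ Hᵀ, Matrix.mul_assoc _ Hᵀ,
    mul_inv_mul_mul_add_eq Hᵀ H Q (hN.isUnit.map detMonoidHom) (hR.isUnit.map detMonoidHom) hS,
    inv_mul_mul_eq_of_isUnit_det ((isUnit_nonsing_inv_det_iff).mpr hS)]

/-- Equality of the `R`-based and `N`-based multi-source LCMV filters. -/
theorem stmt_3 {m l : ℕ} (N : Matrix (Fin m) (Fin m) ℝ) (hN : N.PosDef)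
    (H : Matrix (Fin m) (Fin l) ℝ) (hH : H.rank = l)
    (Q : Matrix (Fin l) (Fin l) ℝ) (hQ : Q.PosDef) :
    (Hᵀ * (H * Q * Hᵀ + N)⁻¹ * H)⁻¹ * Hᵀ * (H * Q * Hᵀ + N)⁻¹ =
      (Hᵀ * N⁻¹ * H)⁻¹ * Hᵀ * N⁻¹ :=
  stmt_3_general N hN H Q hQ
end

section
/- Let C and D be symmetric n×n real matrices with eigenvalues c₁ ≥ … ≥ c_n and d₁ ≥ … ≥ d_n respectively. Then tr(C D) ≤ Σᵢ cᵢ dᵢ. -/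
/-!
Diagonalise `C = U diag(c) Uᵀ` and `D = V diag(d) Vᵀ` with orthogonal `U`, `V`. With `W = Uᵀ V`,
`tr (C D) = ∑ᵢⱼ cᵢ dⱼ Wᵢⱼ²`, and the matrix `(Wᵢⱼ²)` is doubly stochastic. The map
`S ↦ ∑ᵢⱼ cᵢ dⱼ Sᵢⱼ` is linear, so by Birkhoff's theorem its maximum over doubly stochastic matrices
is attained at a permutation matrix, where the rearrangement inequality bounds it by the sum of
products of the decreasingly sorted eigenvalues.
-/

open Matrix Finset

section Rearrangement

variable {n : ℕ}

lemma antitone_sortedDesc (f : Fin n → ℝ) : Antitone (sortedDesc f) :=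
  fun _ _ hij => Tuple.monotone_sort f (Fin.rev_le_rev.mpr hij)

lemma sum_mul_comp_perm_le_sum_sortedDesc (f g : Fin n → ℝ) (σ : Equiv.Perm (Fin n)) :
    ∑ i, f i * g (σ i) ≤ ∑ i, sortedDesc f i * sortedDesc g i := by
  set ef : Equiv.Perm (Fin n) := Fin.revPerm.trans (Tuple.sort f)
  set eg : Equiv.Perm (Fin n) := Fin.revPerm.trans (Tuple.sort g)
  calc ∑ i, f i * g (σ i) = ∑ i, f (ef i) * g (σ (ef i)) :=
        (Equiv.sum_comp ef fun i => f i * g (σ i)).symm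
    _ = ∑ i, sortedDesc f i * sortedDesc g ((ef.trans σ).trans eg.symm i) := by
        simp [sortedDesc, ef, eg]
    _ ≤ ∑ i, sortedDesc f i * sortedDesc g i :=
        ((antitone_sortedDesc f).monovary (antitone_sortedDesc g)).sum_mul_comp_perm_le_sum_mul

lemma dotProduct_mulVec_le_sum_sortedDesc_of_mem_doublyStochastic (f g : Fin n → ℝ)
    {S : Matrix (Fin n) (Fin n) ℝ} (hS : S ∈ doublyStochastic ℝ (Fin n)) :
    f ⬝ᵥ (S *ᵥ g) ≤ ∑ i, sortedDesc f i * sortedDesc g i := by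
  rw [← SetLike.mem_coe, doublyStochastic_eq_convexHull_permMatrix] at hS
  have hlin : IsLinearMap ℝ fun S : Matrix (Fin n) (Fin n) ℝ => f ⬝ᵥ (S *ᵥ g) :=
    ⟨fun S T => by simp [add_mulVec], fun r S => by simp [smul_mulVec]⟩
  refine convexHull_min ?_ (convex_halfSpace_le hlin _) hS
  rintro _ ⟨σ, rfl⟩
  simpa [permMatrix_mulVec, dotProduct] using sum_mul_comp_perm_le_sum_sortedDesc f g σ

end Rearrangement

section Orthogonal

variable {ι : Type*} [Fintype ι] [DecidableEq ι]

lemma of_sq_mem_doublyStochastic_of_mem_unitaryGroup {W : Matrix ι ι ℝ}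
    (hW : W ∈ unitaryGroup ι ℝ) : (of fun i j => W i j ^ 2) ∈ doublyStochastic ℝ ι := by
  refine mem_doublyStochastic_iff_sum.mpr ⟨fun _ _ => sq_nonneg _, fun i => ?_, fun j => ?_⟩
  · simpa [mul_apply, sq] using congr_fun₂ (mem_unitaryGroup_iff.mp hW) i i
  · simpa [mul_apply, sq] using congr_fun₂ (mem_unitaryGroup_iff'.mp hW) j j

lemma trace_diagonal_mul_mul_diagonal_mul_star (c d : ι → ℝ) (W : Matrix ι ι ℝ) :
    trace (diagonal c * W * diagonal d * star W) = c ⬝ᵥ (of (fun i j => W i j ^ 2) *ᵥ d) := by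
  simp only [trace, diag_apply, mul_apply (M := diagonal c * W * diagonal d), mul_diagonal,
    diagonal_mul, star_apply, star_trivial, dotProduct, mulVec, of_apply, mul_sum]
  exact sum_congr rfl fun i _ => sum_congr rfl fun j _ => by ring

end Orthogonal

/-- Theobald / von Neumann trace inequality for symmetric real matrices. -/
theorem stmt_4 {n : ℕ} (C D : Matrix (Fin n) (Fin n) ℝ)
    (hC : C.IsHermitian) (hD : D.IsHermitian) :
    (C * D).trace ≤ ∑ i, sortedDesc hC.eigenvalues i * sortedDesc hD.eigenvalues i := by
  set W : Matrix (Fin n) (Fin n) ℝ :=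
    star (hC.eigenvectorUnitary : Matrix (Fin n) (Fin n) ℝ) * hD.eigenvectorUnitary
  have hW : W ∈ unitaryGroup (Fin n) ℝ :=
    mul_mem (Unitary.star_mem hC.eigenvectorUnitary.2) hD.eigenvectorUnitary.2
  have htrace : (C * D).trace
      = trace (diagonal hC.eigenvalues * W * diagonal hD.eigenvalues * star W) := by
    conv_lhs => rw [hC.spectral_theorem, hD.spectral_theorem]
    simp only [Unitary.conjStarAlgAut_apply, RCLike.ofReal_real_eq_id, Function.id_comp,
      Matrix.mul_assoc]
    rw [trace_mul_comm]
    simp only [W, star_mul, star_star, Matrix.mul_assoc]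
  rw [htrace, trace_diagonal_mul_mul_diagonal_mul_star]
  exact dotProduct_mulVec_le_sum_sortedDesc_of_mem_doublyStochastic _ _
    (of_sq_mem_doublyStochastic_of_mem_unitaryGroup hW)
end

section
/- Let N be symmetric positive definite m×m, H̃₀ an m×l₀ real matrix of full column rank, R = H̃₀ H̃₀ᵀ + N, and let H̃ be any m×l matrix. Define S̃ = H̃ᵀ R⁻¹ H̃ and T̃ = H̃ᵀ R⁻¹ N R⁻¹ H̃. Then S̃ − T̃ is positive semidefinite. -/
open Matrix

/-! With `R = H₀ H₀ᵀ + N` we have `R − N = H₀ H₀ᵀ`, so `S̃ − T̃ = Hᵀ R⁻¹ (R − N) R⁻¹ H = Gᵀ G`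
for `G = H₀ᵀ R⁻¹ H`, using `R⁻¹ R R⁻¹ = R⁻¹` and the symmetry of `R⁻¹`. -/

namespace Matrix

variable {n p q α : Type*} [Fintype n] [DecidableEq n] [Fintype p] [CommRing α]

theorem nonsing_inv_mul_mul_nonsing_inv (A : Matrix n n α) : A⁻¹ * A * A⁻¹ = A⁻¹ := by
  by_cases hA : IsUnit A.det
  · rw [nonsing_inv_mul _ hA, Matrix.one_mul]
  · simp only [nonsing_inv_apply_not_isUnit _ hA, Matrix.zero_mul]

theorem transpose_mul_inv_mul_sub_eq_gram {K : Matrix n p α} {N : Matrix n n α} (hN : N.IsSymm)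
    (B : Matrix n q α) :
    Bᵀ * (K * Kᵀ + N)⁻¹ * B - Bᵀ * (K * Kᵀ + N)⁻¹ * N * (K * Kᵀ + N)⁻¹ * B =
      (Kᵀ * (K * Kᵀ + N)⁻¹ * B)ᵀ * (Kᵀ * (K * Kᵀ + N)⁻¹ * B) := by
  have hKK : (K * Kᵀ).IsSymm := by rw [IsSymm, transpose_mul, transpose_transpose]
  have hRinv : ((K * Kᵀ + N)⁻¹)ᵀ = (K * Kᵀ + N)⁻¹ := (hKK.add hN).inv.eq
  generalize hR : K * Kᵀ + N = R at hRinv ⊢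
  have hRN : K * Kᵀ = R - N := by rw [← hR]; abel
  calc Bᵀ * R⁻¹ * B - Bᵀ * R⁻¹ * N * R⁻¹ * B
      = Bᵀ * (R⁻¹ * R * R⁻¹) * B - Bᵀ * R⁻¹ * N * R⁻¹ * B := by
        rw [nonsing_inv_mul_mul_nonsing_inv]
    _ = Bᵀ * R⁻¹ * (R - N) * R⁻¹ * B := by
        simp only [Matrix.mul_sub, Matrix.sub_mul, Matrix.mul_assoc]
    _ = (Kᵀ * R⁻¹ * B)ᵀ * (Kᵀ * R⁻¹ * B) := by
        simp only [← hRN, transpose_mul, hRinv, transpose_transpose, Matrix.mul_assoc]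

end Matrix

theorem stmt_13_general {m l₀ l : ℕ} (N : Matrix (Fin m) (Fin m) ℝ) (hN : N.PosDef)
    (H₀ : Matrix (Fin m) (Fin l₀) ℝ)
    (H : Matrix (Fin m) (Fin l) ℝ) :
    (Hᵀ * (H₀ * H₀ᵀ + N)⁻¹ * H -
      Hᵀ * (H₀ * H₀ᵀ + N)⁻¹ * N * (H₀ * H₀ᵀ + N)⁻¹ * H).PosSemidef := by
  have hN_symm : N.IsSymm := by
    simpa only [IsSymm, conjTranspose_eq_transpose_of_trivial] using hN.isHermitian.eq
  rw [transpose_mul_inv_mul_sub_eq_gram hN_symm]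
  simpa only [conjTranspose_eq_transpose_of_trivial] using
    posSemidef_conjTranspose_mul_self (H₀ᵀ * (H₀ * H₀ᵀ + N)⁻¹ * H)

/-- With `R = H̃₀ H̃₀ᵀ + N`, `S̃ = H̃ᵀ R⁻¹ H̃` and `T̃ = H̃ᵀ R⁻¹ N R⁻¹ H̃`,
the difference `S̃ − T̃` is positive semidefinite. -/
theorem stmt_13 {m l₀ l : ℕ} (N : Matrix (Fin m) (Fin m) ℝ) (hN : N.PosDef)
    (H₀ : Matrix (Fin m) (Fin l₀) ℝ) (hH : H₀.rank = l₀)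
    (H : Matrix (Fin m) (Fin l) ℝ) :
    (Hᵀ * (H₀ * H₀ᵀ + N)⁻¹ * H -
      Hᵀ * (H₀ * H₀ᵀ + N)⁻¹ * N * (H₀ * H₀ᵀ + N)⁻¹ * H).PosSemidef :=
  stmt_13_general N hN H₀ H
end

section
/- Let S̃ be symmetric positive definite l×l and T̃ symmetric positive definite with T̃ ⪯ S̃. Let P_{r₁} and P_{r₂} (r₁ ≤ r₂) be the orthogonal projections onto the top-r₁ and top-r₂ eigenspaces of S̃. Then tr(S̃ T̃⁻¹ P_{r₂}) − r₂ ≥ tr(S̃ T̃⁻¹ P_{r₁}) − r₁. -/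
/-!
Put `Y := T⁻¹ - S⁻¹`, positive semidefinite because inversion reverses the Loewner order.
Cyclicity of the trace gives `tr (S T⁻¹ P) - tr P = tr (Y (P S))` for every `P`. For
`P_r = V diag χ_r Vᵀ` one has `tr P_r = r` and `P_r S = V diag (χ_r d) Vᵀ`, and since the
eigenvalues `d` are nonnegative, `P_{r₂} S - P_{r₁} S = V diag ((χ_{r₂} - χ_{r₁}) d) Vᵀ ⪰ 0`.
The trace of a product of positive semidefinite matrices is nonnegative, so
`tr (Y (P_{r₁} S)) ≤ tr (Y (P_{r₂} S))`.
-/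

open Matrix
open scoped ComplexOrder

namespace Matrix

section RCLike

variable {n 𝕜 : Type*} [Fintype n] [RCLike 𝕜]

open scoped MatrixOrder in
theorem PosSemidef.trace_mul_nonneg {A B : Matrix n n 𝕜} (hA : A.PosSemidef)
    (hB : B.PosSemidef) : 0 ≤ (A * B).trace := by
  classical
  obtain ⟨C, rfl⟩ := CStarAlgebra.nonneg_iff_eq_star_mul_self.mp hA.nonneg
  rw [star_eq_conjTranspose, Matrix.mul_assoc, trace_mul_comm, Matrix.mul_assoc,
    ← Matrix.mul_assoc]
  exact (hB.mul_mul_conjTranspose_same C).trace_nonneg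

theorem PosSemidef.trace_mul_le_trace_mul {Y A B : Matrix n n 𝕜} (hY : Y.PosSemidef)
    (hAB : (B - A).PosSemidef) : (Y * A).trace ≤ (Y * B).trace := by
  simpa [Matrix.mul_sub, trace_sub] using hY.trace_mul_nonneg hAB

/-- The Schur complement of `S` in `[[S, 1], [1, T⁻¹]] = [[S - T, 0], [0, 0]] + [[T, 1], [1, T⁻¹]]`
is `T⁻¹ - S⁻¹`, while that of `T` in the second summand is `0`. -/
theorem PosDef.posSemidef_inv_sub_inv [DecidableEq n] {S T : Matrix n n 𝕜} (hS : S.PosDef)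
    (hT : T.PosDef) (hTS : (S - T).PosSemidef) : (T⁻¹ - S⁻¹).PosSemidef := by
  have := hS.isUnit.invertible
  have := hT.isUnit.invertible
  have hT_block : (fromBlocks T 1 1ᴴ T⁻¹).PosSemidef := by
    rw [hT.fromBlocks₁₁]
    simpa using PosSemidef.zero
  have hST_block : (fromBlocks (S - T) 0 0 0 : Matrix (n ⊕ n) (n ⊕ n) 𝕜).PosSemidef := by
    simpa [conjTranspose_fromCols_eq_fromRows_conjTranspose, fromRows_mul, fromRows_mul_fromCols,
      ← fromCols_fromRows_eq_fromBlocks]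
      using hTS.conjTranspose_mul_mul_same (fromCols 1 0 : Matrix n (n ⊕ n) 𝕜)
  have hS_block : (fromBlocks S 1 1ᴴ T⁻¹).PosSemidef := by
    simpa [fromBlocks_add] using hST_block.add hT_block
  rwa [hS.fromBlocks₁₁, conjTranspose_one, Matrix.one_mul, Matrix.mul_one] at hS_block

end RCLike

section Orthogonal

variable {n R : Type*} [Fintype n] [DecidableEq n]

theorem trace_mul_inv_mul_sub_trace [CommRing R] {S : Matrix n n R} (hS : IsUnit S.det)
    (T P : Matrix n n R) : (S * T⁻¹ * P).trace - P.trace = ((T⁻¹ - S⁻¹) * (P * S)).trace := by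
  rw [← Matrix.mul_assoc, trace_mul_cycle (T⁻¹ - S⁻¹), Matrix.mul_sub, Matrix.sub_mul, trace_sub,
    mul_nonsing_inv S hS, Matrix.one_mul]

variable {V : Matrix n n R}

theorem trace_mul_diagonal_mul_transpose [CommRing R] (hV : Vᵀ * V = 1) (f : n → R) :
    (V * diagonal f * Vᵀ).trace = ∑ i, f i := by
  rw [trace_mul_cycle, hV, Matrix.one_mul, trace_diagonal]

theorem mul_diagonal_mul_transpose_mul_self [CommRing R] (hV : Vᵀ * V = 1) (f g : n → R) :
    V * diagonal f * Vᵀ * (V * diagonal g * Vᵀ) = V * diagonal (f * g) * Vᵀ := by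
  simp only [Matrix.mul_assoc]
  rw [← Matrix.mul_assoc Vᵀ, hV, Matrix.one_mul, ← Matrix.mul_assoc (diagonal f),
    diagonal_mul_diagonal]
  rfl

variable [CommRing R] [PartialOrder R] [StarRing R] [TrivialStar R] [StarOrderedRing R]

theorem nonneg_of_posSemidef_mul_diagonal_mul_transpose {d : n → R} (hV : Vᵀ * V = 1)
    (h : (V * diagonal d * Vᵀ).PosSemidef) : 0 ≤ d := by
  have := h.conjTranspose_mul_mul_same V
  rwa [conjTranspose_eq_transpose_of_trivial, Matrix.mul_assoc, Matrix.mul_assoc, hV,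
    Matrix.mul_one, ← Matrix.mul_assoc, hV, Matrix.one_mul, posSemidef_diagonal_iff] at this

theorem posSemidef_mul_diagonal_mul_transpose_sub {f g : n → R} (hfg : f ≤ g) :
    (V * diagonal g * Vᵀ - V * diagonal f * Vᵀ).PosSemidef := by
  rw [← Matrix.sub_mul, ← Matrix.mul_sub, diagonal_sub, ← conjTranspose_eq_transpose_of_trivial]
  exact (PosSemidef.diagonal (sub_nonneg.mpr hfg)).mul_mul_conjTranspose_same V

end Orthogonal

end Matrix

theorem Fin.sum_ite_val_lt {R : Type*} [AddCommMonoidWithOne R] {l r : ℕ} (h : r ≤ l) :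
    ∑ i : Fin l, (if (i : ℕ) < r then (1 : R) else 0) = r := by
  rw [Finset.sum_boole, Fin.card_filter_val_lt, min_eq_right h]

theorem stmt_14_general {l : ℕ} (S T : Matrix (Fin l) (Fin l) ℝ) (hS : S.PosDef) (hT : T.PosDef)
    (hTS : (S - T).PosSemidef) (r₁ r₂ : ℕ) (hr : r₁ ≤ r₂) (hr₂ : r₂ ≤ l)
    (V : Matrix (Fin l) (Fin l) ℝ) (d : Fin l → ℝ)
    (hV : Vᵀ * V = 1)
    (hSdec : S = V * diagonal d * Vᵀ) :
    (S * T⁻¹ * (V * diagonal (fun i : Fin l => if (i : ℕ) < r₁ then (1 : ℝ) else 0) * Vᵀ)).trace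
        - (r₁ : ℝ) ≤
    (S * T⁻¹ * (V * diagonal (fun i : Fin l => if (i : ℕ) < r₂ then (1 : ℝ) else 0) * Vᵀ)).trace
        - (r₂ : ℝ) := by
  have hd : 0 ≤ d :=
    nonneg_of_posSemidef_mul_diagonal_mul_transpose hV (hSdec ▸ hS.posSemidef)
  have hshift : ∀ r ≤ l,
      (S * T⁻¹ * (V * diagonal (fun i : Fin l => if (i : ℕ) < r then (1 : ℝ) else 0) * Vᵀ)).trace
        - r = ((T⁻¹ - S⁻¹) *
          (V * diagonal ((fun i : Fin l => if (i : ℕ) < r then (1 : ℝ) else 0) * d) * Vᵀ)).trace := by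
    intro r hr
    rw [← Fin.sum_ite_val_lt hr, ← trace_mul_diagonal_mul_transpose hV,
      trace_mul_inv_mul_sub_trace hS.det_pos.ne'.isUnit]
    congr 2
    rw [hSdec, mul_diagonal_mul_transpose_mul_self hV]
  rw [hshift r₁ (hr.trans hr₂), hshift r₂ hr₂]
  refine (hS.posSemidef_inv_sub_inv hT hTS).trace_mul_le_trace_mul
    (posSemidef_mul_diagonal_mul_transpose_sub fun i => ?_)
  dsimp only [Pi.mul_apply]
  gcongr
  · exact hd i
  · split_ifs <;> norm_num
    omega

/-- If `T̃ ⪯ S̃` with both positive definite, and `P_{r₁}, P_{r₂}` are top-`r₁`, top-`r₂`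
spectral projections of `S̃` (via a spectral decomposition with nonincreasing eigenvalues),
then `tr(S̃ T̃⁻¹ P_{r₂}) − r₂ ≥ tr(S̃ T̃⁻¹ P_{r₁}) − r₁` for `r₁ ≤ r₂`. -/
theorem stmt_14 {l : ℕ} (S T : Matrix (Fin l) (Fin l) ℝ) (hS : S.PosDef) (hT : T.PosDef)
    (hTS : (S - T).PosSemidef) (r₁ r₂ : ℕ) (hr : r₁ ≤ r₂) (hr₂ : r₂ ≤ l)
    (V : Matrix (Fin l) (Fin l) ℝ) (d : Fin l → ℝ)
    (hV : Vᵀ * V = 1) (hd : Antitone d)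
    (hSdec : S = V * diagonal d * Vᵀ) :
    (S * T⁻¹ * (V * diagonal (fun i : Fin l => if (i : ℕ) < r₁ then (1 : ℝ) else 0) * Vᵀ)).trace
        - (r₁ : ℝ) ≤
    (S * T⁻¹ * (V * diagonal (fun i : Fin l => if (i : ℕ) < r₂ then (1 : ℝ) else 0) * Vᵀ)).trace
        - (r₂ : ℝ) :=
  stmt_14_general S T hS hT hTS r₁ r₂ hr hr₂ V d hV hSdec
end

section
/- Let S̃, T̃, G̃ be symmetric positive definite l×l real matrices with T̃ ⪰ S̃ G̃⁻¹ S̃, and let P be the orthogonal projection onto the top-r eigenspace of S̃ for some 1 ≤ r ≤ l. Then tr(S̃ T̃⁻¹ P) ≤ tr(G̃ S̃⁻¹ P). -/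
/-!
Since `T ⪰ S G⁻¹ S ≻ 0`, Loewner inversion gives `F := S⁻¹ G S⁻¹ - T⁻¹ ⪰ 0`, and the difference of
the two traces is `tr (S F P)`. Conjugating by the orthogonal `V` that diagonalises both `S` and `P`,
this becomes `tr (D H E)` with `H = Vᵀ F V ⪰ 0` and `D`, `E` nonnegative diagonal, i.e. a
nonnegative combination of diagonal entries of `H`.
-/

open Matrix

open scoped ComplexOrder

namespace Matrix

variable {n : Type*} [Fintype n] [DecidableEq n]

lemma PosDef.inv_sub_inv_posSemidef {𝕜 : Type*} [RCLike 𝕜] {A B : Matrix n n 𝕜}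
    (hA : A.PosDef) (hB : B.PosDef) (hAB : (A - B).PosSemidef) :
    (B⁻¹ - A⁻¹).PosSemidef := by
  have := hA.isUnit.invertible
  have := hB.isUnit.invertible
  have key : B⁻¹ - A⁻¹ =
      (A⁻¹ - B⁻¹)ᴴ * B * (A⁻¹ - B⁻¹) + (A⁻¹)ᴴ * (A - B) * A⁻¹ := by
    rw [conjTranspose_sub, hA.inv.isHermitian.eq, hB.inv.isHermitian.eq]
    simp only [sub_mul, mul_sub, Matrix.mul_assoc, mul_inv_of_invertible, inv_mul_of_invertible,
      Matrix.mul_one, Matrix.one_mul]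
    abel
  rw [key]
  exact (hB.posSemidef.conjTranspose_mul_mul_same _).add (hAB.conjTranspose_mul_mul_same _)

lemma PosSemidef.trace_diagonal_mul_nonneg {R : Type*} [CommRing R] [PartialOrder R]
    [IsOrderedRing R] [StarRing R] {H : Matrix n n R} (hH : H.PosSemidef) {c : n → R}
    (hc : 0 ≤ c) : 0 ≤ (diagonal c * H).trace := by
  simp only [trace, diag, diagonal_mul]
  exact Finset.sum_nonneg fun i _ => mul_nonneg (hc i) hH.diag_nonneg

lemma PosSemidef.trace_conj_diagonal_mul_mul_conj_diagonal_nonneg {V F : Matrix n n ℝ}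
    (hV : Vᵀ * V = 1) (hF : F.PosSemidef) {a b : n → ℝ} (ha : 0 ≤ a) (hb : 0 ≤ b) :
    0 ≤ (V * diagonal a * Vᵀ * F * (V * diagonal b * Vᵀ)).trace := by
  have hH : (Vᵀ * F * V).PosSemidef := by
    simpa only [conjTranspose_eq_transpose_of_trivial] using hF.conjTranspose_mul_mul_same V
  have hconj : V * diagonal a * Vᵀ * F * (V * diagonal b * Vᵀ) =
      V * (diagonal a * (Vᵀ * F * V) * diagonal b) * Vᵀ := by
    simp only [Matrix.mul_assoc]
  rw [hconj, trace_mul_comm, ← Matrix.mul_assoc, hV, Matrix.one_mul, trace_mul_comm,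
    ← Matrix.mul_assoc, diagonal_mul_diagonal]
  exact hH.trace_diagonal_mul_nonneg fun i => mul_nonneg (hb i) (ha i)

end Matrix

theorem stmt_15_general {l : ℕ} (S T G : Matrix (Fin l) (Fin l) ℝ)
    (hS : S.PosDef) (hT : T.PosDef) (hG : G.PosDef)
    (hTG : (T - S * G⁻¹ * S).PosSemidef)
    (r : ℕ)
    (V : Matrix (Fin l) (Fin l) ℝ) (d : Fin l → ℝ)
    (hV : Vᵀ * V = 1)
    (hSdec : S = V * diagonal d * Vᵀ) :
    (S * T⁻¹ * (V * diagonal (fun i : Fin l => if (i : ℕ) < r then (1 : ℝ) else 0) * Vᵀ)).trace ≤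
    (G * S⁻¹ * (V * diagonal (fun i : Fin l => if (i : ℕ) < r then (1 : ℝ) else 0) * Vᵀ)).trace := by
  have := hS.isUnit.invertible
  have hF : (S⁻¹ * G * S⁻¹ - T⁻¹).PosSemidef := by
    have hM : (S * G⁻¹ * S).PosDef := by
      simpa only [hS.isHermitian.eq] using
        hG.inv.conjTranspose_mul_mul_same (mulVec_injective_of_isUnit hS.isUnit)
    have := hG.isUnit.invertible
    simpa only [Matrix.mul_inv_rev, inv_inv_of_invertible, Matrix.mul_assoc] using
      hT.inv_sub_inv_posSemidef hM hTG
  have hd : 0 ≤ d := by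
    have hD := hS.posSemidef.conjTranspose_mul_mul_same V
    rw [conjTranspose_eq_transpose_of_trivial, hSdec] at hD
    simp only [← Matrix.mul_assoc, hV, Matrix.one_mul] at hD
    rw [Matrix.mul_assoc, hV, Matrix.mul_one] at hD
    exact posSemidef_diagonal_iff.mp hD
  have he : 0 ≤ fun i : Fin l => if (i : ℕ) < r then (1 : ℝ) else 0 := fun i => by
    dsimp only [Pi.zero_apply]
    split_ifs <;> norm_num
  have hGS : G * S⁻¹ = S * (S⁻¹ * G * S⁻¹) := by
    simp only [← Matrix.mul_assoc, mul_inv_of_invertible, Matrix.one_mul]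
  have key := hF.trace_conj_diagonal_mul_mul_conj_diagonal_nonneg hV hd he
  rwa [← hSdec, Matrix.mul_sub, Matrix.sub_mul, trace_sub, ← hGS, sub_nonneg] at key

/-- If `T̃ ⪰ S̃ G̃⁻¹ S̃` and `P` is a top-`r` spectral projection of `S̃`, then
`tr(S̃ T̃⁻¹ P) ≤ tr(G̃ S̃⁻¹ P)`. -/
theorem stmt_15 {l : ℕ} (S T G : Matrix (Fin l) (Fin l) ℝ)
    (hS : S.PosDef) (hT : T.PosDef) (hG : G.PosDef)
    (hTG : (T - S * G⁻¹ * S).PosSemidef)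
    (r : ℕ) (hr1 : 1 ≤ r) (hrl : r ≤ l)
    (V : Matrix (Fin l) (Fin l) ℝ) (d : Fin l → ℝ)
    (hV : Vᵀ * V = 1) (hd : Antitone d)
    (hSdec : S = V * diagonal d * Vᵀ) :
    (S * T⁻¹ * (V * diagonal (fun i : Fin l => if (i : ℕ) < r then (1 : ℝ) else 0) * Vᵀ)).trace ≤
    (G * S⁻¹ * (V * diagonal (fun i : Fin l => if (i : ℕ) < r then (1 : ℝ) else 0) * Vᵀ)).trace :=
  stmt_15_general S T G hS hT hG hTG r V d hV hSdec
end
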